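/- Combining the two marginal-cost monotonicity conclusions with the single-crossing lemma: if χ is C², strictly convex with χ_νΔ > 0, and points (ν_t,Δ_t), (ν_{t+1},Δ_{t+1}) satisfy χ_ν(ν_{t+1},Δ_{t+1}) > χ_ν(ν_t,Δ_t) and χ_Δ(ν_{t+1},Δ_{t+1}) < χ_Δ(ν_t,Δ_t), then ν_{t+1} > ν_t and Δ_{t+1} < Δ_t. -/

import Mathlib

/-!
Write `d = pt1 - pt`. The mean value theorem, applied to each partial derivative along the
segment from `pt` to `pt1`, gives `Δχ_ν = d.1 h₁₁ + d.2 h₁₂` and `Δχ_Δ = d.1 h₂₁ + d.2 h₂₂` with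
Hessian entries taken at two points of the segment. Convexity makes the diagonal entries
nonnegative and the gradient monotone, `0 ≤ d.1 Δχ_ν + d.2 Δχ_Δ`, and the cross partials are
positive. Now if `d.1 ≤ 0`, either `d.2 ≤ 0` and then `Δχ_ν ≤ 0`, or `d.2 > 0` and then
`d.1 Δχ_ν + d.2 Δχ_Δ < 0`; the case `d.2 ≥ 0` is symmetric.
-/

open Set Filter Topology AffineMap

theorem fderiv_fderiv_apply_const {E F : Type*} [NormedAddCommGroup E] [NormedSpace ℝ E]
    [NormedAddCommGroup F] [NormedSpace ℝ F] {f : E → F} {x : E}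
    (hd₂ : DifferentiableAt ℝ (fderiv ℝ f) x) (v w : E) :
    fderiv ℝ (fun q => fderiv ℝ f q w) x v = fderiv ℝ (fderiv ℝ f) x v w := by
  simp [fderiv_clm_apply hd₂ (differentiableAt_const w)]

section SecondOrder

variable {E : Type*} [NormedAddCommGroup E] [NormedSpace ℝ E] {s : Set E} {f : E → ℝ}

theorem ConvexOn.monotoneOn_fderiv_lineMap (hf : ConvexOn ℝ s f)
    (hd : ∀ z ∈ s, DifferentiableAt ℝ f z) (x y : E) :
    MonotoneOn (fun t : ℝ => fderiv ℝ f (lineMap x y t) (y - x)) (lineMap x y ⁻¹' s) := by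
  have hderiv : ∀ t ∈ lineMap x y ⁻¹' s,
      HasDerivAt (f ∘ lineMap x y) (fderiv ℝ f (lineMap x y t) (y - x)) t := fun t ht =>
    (hd _ ht).hasFDerivAt.comp_hasDerivAt t hasDerivAt_lineMap
  refine ((hf.comp_affineMap (lineMap x y)).monotoneOn_deriv
    fun t ht => (hderiv t ht).differentiableAt).congr fun t ht => (hderiv t ht).deriv

theorem ConvexOn.fderiv_apply_sub_le (hf : ConvexOn ℝ s f)
    (hd : ∀ z ∈ s, DifferentiableAt ℝ f z) {x y : E} (hx : x ∈ s) (hy : y ∈ s) :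
    fderiv ℝ f x (y - x) ≤ fderiv ℝ f y (y - x) := by
  simpa using hf.monotoneOn_fderiv_lineMap hd x y (by simpa using hx) (by simpa using hy)
    zero_le_one

theorem ConvexOn.fderiv_fderiv_apply_self_nonneg (hs : IsOpen s) (hf : ConvexOn ℝ s f)
    (hd : ∀ z ∈ s, DifferentiableAt ℝ f z) {x : E} (hx : x ∈ s)
    (hd₂ : DifferentiableAt ℝ (fderiv ℝ f) x) (v : E) :
    0 ≤ fderiv ℝ (fderiv ℝ f) x v v := by
  have hline : HasDerivAt (fun t : ℝ => fderiv ℝ f (lineMap x (x + v) t) v)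
      (fderiv ℝ (fderiv ℝ f) x v v) 0 := by
    have hc := hd₂.hasFDerivAt.comp_hasDerivAt_of_eq (0 : ℝ)
      (hasDerivAt_lineMap (a := x) (b := x + v)) (lineMap_apply_zero x (x + v)).symm
    simpa using hc.clm_apply (hasDerivAt_const (0 : ℝ) v)
  have hnhds : lineMap x (x + v) ⁻¹' s ∈ 𝓝 (0 : ℝ) :=
    (hasDerivAt_lineMap (a := x) (b := x + v) (x := 0)).continuousAt.preimage_mem_nhds
      (by simpa using hs.mem_nhds hx)
  have hacc : AccPt (0 : ℝ) (𝓟 (lineMap x (x + v) ⁻¹' s)) := by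
    simpa using (PerfectSpace.univ_preperfect (0 : ℝ) (mem_univ 0)).nhds_inter hnhds
  have hmono := hf.monotoneOn_fderiv_lineMap hd x (x + v)
  rw [add_sub_cancel_left] at hmono
  exact hline.hasDerivWithinAt.nonneg_of_monotoneOn hacc hmono

theorem Convex.exists_mem_segment_fderiv_sub_eq (hs : Convex ℝ s)
    (hd₂ : ∀ z ∈ s, DifferentiableAt ℝ (fderiv ℝ f) z) {x y : E} (hx : x ∈ s) (hy : y ∈ s)
    (w : E) :
    ∃ z ∈ segment ℝ x y, fderiv ℝ f y w - fderiv ℝ f x w = fderiv ℝ (fderiv ℝ f) z (y - x) w :=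
  domain_mvt (f' := fun z => (fderiv ℝ (fderiv ℝ f) z).flip w)
    (fun z hz => ((hd₂ z hz).hasFDerivAt.clm_apply (hasFDerivAt_const w z)).hasFDerivWithinAt
      |>.congr_fderiv (by simp)) hs hx hy

end SecondOrder

theorem ContinuousLinearMap.apply_eq_fst_smul_add_snd_smul {M : Type*} [TopologicalSpace M]
    [AddCommMonoid M] [Module ℝ M] (T : ℝ × ℝ →L[ℝ] M) (u : ℝ × ℝ) :
    T u = u.1 • T (1, 0) + u.2 • T (0, 1) := by
  conv_lhs => rw [show u = u.1 • ((1 : ℝ), (0 : ℝ)) + u.2 • ((0 : ℝ), (1 : ℝ)) by ext <;> simp]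
  rw [map_add, map_smul, map_smul]

theorem pos_and_neg_of_single_crossing {a b Δf Δg h₁₁ h₁₂ h₂₁ h₂₂ : ℝ}
    (hΔf : 0 < Δf) (hΔg : Δg < 0) (hmono : 0 ≤ a * Δf + b * Δg)
    (hf : Δf = a * h₁₁ + b * h₁₂) (hg : Δg = a * h₂₁ + b * h₂₂)
    (h₁₁ : 0 ≤ h₁₁) (h₁₂ : 0 < h₁₂) (h₂₁ : 0 < h₂₁) (h₂₂ : 0 ≤ h₂₂) :
    0 < a ∧ b < 0 := by
  constructor
  · by_contra! ha
    rcases le_or_gt b 0 with hb | hb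
    · nlinarith
    · nlinarith
  · by_contra! hb
    rcases le_or_gt 0 a with ha | ha
    · nlinarith
    · nlinarith

/-- Lemma A.5 applied in Proposition 4: combining strict monotonicity of the
marginal costs with the single-crossing property of a supermodular strictly
convex C² cost function yields strictly increasing flow utilities and strictly
decreasing distortions. -/
theorem monotone_dynamics_from_marginal_costs
    (D : Set (ℝ × ℝ)) (hD : IsOpen D) (hDc : Convex ℝ D)
    (χ : ℝ × ℝ → ℝ) (hχ : ContDiffOn ℝ 2 χ D)
    (hconv : StrictConvexOn ℝ D χ)
    (hcross : ∀ p ∈ D, 0 < fderiv ℝ (fun q => fderiv ℝ χ q (1, 0)) p (0, 1))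
    (pt pt1 : ℝ × ℝ) (hpt : pt ∈ D) (hpt1 : pt1 ∈ D)
    (hν : fderiv ℝ χ pt (1, 0) < fderiv ℝ χ pt1 (1, 0))
    (hΔ : fderiv ℝ χ pt1 (0, 1) < fderiv ℝ χ pt (0, 1)) :
    pt.1 < pt1.1 ∧ pt1.2 < pt.2 := by
  have hd : ∀ p ∈ D, DifferentiableAt ℝ χ p := fun p hp =>
    (hχ.contDiffAt (hD.mem_nhds hp)).differentiableAt (by norm_num)
  have hd₂ : ∀ p ∈ D, DifferentiableAt ℝ (fderiv ℝ χ) p := fun p hp =>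
    ((hχ.fderiv_of_isOpen (m := 1) hD (by norm_num)).contDiffAt (hD.mem_nhds hp)).differentiableAt
      (by norm_num)
  have hcross' : ∀ p ∈ D, 0 < fderiv ℝ (fderiv ℝ χ) p (0, 1) (1, 0) := fun p hp =>
    fderiv_fderiv_apply_const (hd₂ p hp) (0, 1) (1, 0) ▸ hcross p hp
  have hsymm : ∀ p ∈ D, IsSymmSndFDerivAt ℝ χ p := fun p hp =>
    (hχ.contDiffAt (hD.mem_nhds hp)).isSymmSndFDerivAt (by simp)
  have hmono := hconv.convexOn.fderiv_apply_sub_le hd hpt hpt1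
  obtain ⟨p₁, hp₁, hνmvt⟩ := hDc.exists_mem_segment_fderiv_sub_eq hd₂ hpt hpt1 (1, 0)
  obtain ⟨p₂, hp₂, hΔmvt⟩ := hDc.exists_mem_segment_fderiv_sub_eq hd₂ hpt hpt1 (0, 1)
  replace hp₁ := hDc.segment_subset hpt hpt1 hp₁
  replace hp₂ := hDc.segment_subset hpt hpt1 hp₂
  simp only [ContinuousLinearMap.apply_eq_fst_smul_add_snd_smul _ (pt1 - pt),
    add_apply, smul_apply, smul_eq_mul, Prod.fst_sub, Prod.snd_sub] at hmono hνmvt hΔmvt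
  have key := pos_and_neg_of_single_crossing (sub_pos.2 hν) (sub_neg.2 hΔ)
    (by linarith) hνmvt hΔmvt
    (hconv.convexOn.fderiv_fderiv_apply_self_nonneg hD hd hp₁ (hd₂ p₁ hp₁) _)
    (hcross' p₁ hp₁) (hsymm p₂ hp₂ (1, 0) (0, 1) ▸ hcross' p₂ hp₂)
    (hconv.convexOn.fderiv_fderiv_apply_self_nonneg hD hd hp₂ (hd₂ p₂ hp₂) _)
  exact ⟨sub_pos.1 key.1, sub_neg.1 key.2⟩
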